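/- arXiv:0708.2987 — 2 statements merged into one kernel-verified Lean document; each statement's English description precedes it below -/
import Mathlib

section
/- For every ε > 0, ∑_{d ≤ D} d^{1/3}/(d₀^{2/3} · d') ≪ D^ε, where d₀ is the least natural number m with d | m³ and d' is the least natural number m with d | m². -/
/-- `cube0 d` is the least positive natural number `m` with `d ∣ m ^ 3`. -/
noncomputable def cube0 (d : ℕ) : ℕ := sInf {m : ℕ | 0 < m ∧ d ∣ m ^ 3}

/-- `sq0 d` is the least positive natural number `m` with `d ∣ m ^ 2`. -/
noncomputable def sq0 (d : ℕ) : ℕ := sInf {m : ℕ | 0 < m ∧ d ∣ m ^ 2}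

open Finset

private lemma cube0_spec (d : ℕ) (hd : d ≠ 0) : 0 < cube0 d ∧ d ∣ (cube0 d) ^ 3 := by
  have h : cube0 d ∈ {m : ℕ | 0 < m ∧ d ∣ m ^ 3} :=
    Nat.sInf_mem ⟨d, Nat.pos_of_ne_zero hd, dvd_pow_self d (by norm_num)⟩
  exact h

private lemma sq0_spec (d : ℕ) (hd : d ≠ 0) : 0 < sq0 d ∧ d ∣ (sq0 d) ^ 2 := by
  have h : sq0 d ∈ {m : ℕ | 0 < m ∧ d ∣ m ^ 2} :=
    Nat.sInf_mem ⟨d, Nat.pos_of_ne_zero hd, dvd_pow_self d (by norm_num)⟩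
  exact h

private lemma prod_pow_dvd {c : ℕ} (hc : c ≠ 0) {s : Finset ℕ}
    (hs : ∀ p ∈ s, p.Prime) {E : ℕ → ℕ} (hE : ∀ p ∈ s, E p ≤ c.factorization p) :
    ∏ p ∈ s, p ^ E p ∣ c := by
  classical
  have hne : ∏ p ∈ s, p ^ E p ≠ 0 := by
    rw [Finset.prod_ne_zero_iff]
    exact fun p hp => pow_ne_zero _ (hs p hp).ne_zero
  rw [← Nat.factorization_le_iff_dvd hne hc]
  rw [Nat.factorization_prod (fun p hp => pow_ne_zero _ (hs p hp).ne_zero)]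
  intro q
  rw [Finset.sum_apply']
  have : ∀ p ∈ s, ((p ^ E p).factorization) q = if p = q then E p else 0 := by
    intro p hp
    rw [(hs p hp).factorization_pow, Finsupp.single_apply]
  rw [Finset.sum_congr rfl this, Finset.sum_ite_eq' s q E]
  split_ifs with h
  · exact hE q h
  · exact Nat.zero_le _

private lemma le_factorization_cube0 {d p : ℕ} (hd : d ≠ 0) (hp : p.Prime) :
    (d.factorization p + 2) / 3 ≤ (cube0 d).factorization p := by
  obtain ⟨hc, hdvd⟩ := cube0_spec d hd
  have h1 : p ^ d.factorization p ∣ (cube0 d) ^ 3 := (Nat.ordProj_dvd d p).trans hdvd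
  rw [hp.pow_dvd_iff_le_factorization (pow_ne_zero _ hc.ne')] at h1
  rw [Nat.factorization_pow, Finsupp.smul_apply, smul_eq_mul] at h1
  omega

private lemma le_factorization_sq0 {d p : ℕ} (hd : d ≠ 0) (hp : p.Prime) :
    (d.factorization p + 1) / 2 ≤ (sq0 d).factorization p := by
  obtain ⟨hc, hdvd⟩ := sq0_spec d hd
  have h1 : p ^ d.factorization p ∣ (sq0 d) ^ 2 := (Nat.ordProj_dvd d p).trans hdvd
  rw [hp.pow_dvd_iff_le_factorization (pow_ne_zero _ hc.ne')] at h1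
  rw [Nat.factorization_pow, Finsupp.smul_apply, smul_eq_mul] at h1
  omega

private lemma prod_dvd_cube0 {d : ℕ} (hd : d ≠ 0) :
    ∏ p ∈ d.primeFactors, p ^ ((d.factorization p + 2) / 3) ∣ cube0 d :=
  prod_pow_dvd (cube0_spec d hd).1.ne' (fun p hp => Nat.prime_of_mem_primeFactors hp)
    (fun p _hp => le_factorization_cube0 hd (Nat.prime_of_mem_primeFactors _hp))

private lemma prod_dvd_sq0 {d : ℕ} (hd : d ≠ 0) :
    ∏ p ∈ d.primeFactors, p ^ ((d.factorization p + 1) / 2) ∣ sq0 d :=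
  prod_pow_dvd (sq0_spec d hd).1.ne' (fun p hp => Nat.prime_of_mem_primeFactors hp)
    (fun p _hp => le_factorization_sq0 hd (Nat.prime_of_mem_primeFactors _hp))

noncomputable def Wf (ε : ℝ) (p a : ℕ) : ℝ :=
  (p : ℝ) ^ ((a : ℝ) * (1/3 - ε) - 2/3 * (((a + 2) / 3 : ℕ) : ℝ) - (((a + 1) / 2 : ℕ) : ℝ))

private lemma Wf_zero (ε : ℝ) (p : ℕ) : Wf ε p 0 = 1 := by
  norm_num [Wf]

private lemma Wf_nonneg (ε : ℝ) (p a : ℕ) : 0 ≤ Wf ε p a :=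
  Real.rpow_nonneg (Nat.cast_nonneg p) _

private lemma prod_rpow_div (P : Finset ℕ) (hP : ∀ p ∈ P, (0:ℝ) < p) (x y z : ℕ → ℝ) :
    (∏ p ∈ P, (p:ℝ) ^ (x p)) /
      ((∏ p ∈ P, (p:ℝ) ^ (y p)) ^ ((2:ℝ)/3) * ∏ p ∈ P, (p:ℝ) ^ (z p))
      = ∏ p ∈ P, (p:ℝ) ^ (x p - 2/3 * y p - z p) := by
  rw [← Real.finset_prod_rpow _ _ (fun p hp => Real.rpow_nonneg (hP p hp).le _) _]
  rw [← Finset.prod_mul_distrib, ← Finset.prod_div_distrib]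
  refine Finset.prod_congr rfl fun p hp => ?_
  rw [← Real.rpow_mul (hP p hp).le, ← Real.rpow_add (hP p hp), ← Real.rpow_sub (hP p hp)]
  congr 1; ring

private lemma pointwise (ε : ℝ) {d : ℕ} (hd : d ≠ 0) :
    (d : ℝ) ^ ((1:ℝ)/3) / ((cube0 d : ℝ) ^ ((2:ℝ)/3) * (sq0 d : ℝ)) * (d : ℝ) ^ (-ε)
      ≤ ∏ p ∈ d.primeFactors, Wf ε p (d.factorization p) := by
  set P := d.primeFactors with hPdef
  have hP : ∀ p ∈ P, (0:ℝ) < p := fun p hp =>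
    Nat.cast_pos.mpr (Nat.prime_of_mem_primeFactors hp).pos
  have hdpos : (0:ℝ) < d := Nat.cast_pos.mpr (Nat.pos_of_ne_zero hd)
  have hcpos : (0:ℝ) < cube0 d := Nat.cast_pos.mpr (cube0_spec d hd).1
  have hspos : (0:ℝ) < sq0 d := Nat.cast_pos.mpr (sq0_spec d hd).1
  have hC : (∏ p ∈ P, (p:ℝ) ^ ((((d.factorization p + 2) / 3 : ℕ)):ℝ)) ≤ (cube0 d : ℝ) := by
    have h := Nat.le_of_dvd (cube0_spec d hd).1 (prod_dvd_cube0 hd)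
    have h' : ((∏ p ∈ P, p ^ ((d.factorization p + 2) / 3) : ℕ) : ℝ) ≤ (cube0 d : ℝ) := by
      exact_mod_cast h
    push_cast at h'
    simpa [Real.rpow_natCast] using h'
  have hS : (∏ p ∈ P, (p:ℝ) ^ ((((d.factorization p + 1) / 2 : ℕ)):ℝ)) ≤ (sq0 d : ℝ) := by
    have h := Nat.le_of_dvd (sq0_spec d hd).1 (prod_dvd_sq0 hd)
    have h' : ((∏ p ∈ P, p ^ ((d.factorization p + 1) / 2) : ℕ) : ℝ) ≤ (sq0 d : ℝ) := by
      exact_mod_cast h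
    push_cast at h'
    simpa [Real.rpow_natCast] using h'
  have hCpos : (0:ℝ) < ∏ p ∈ P, (p:ℝ) ^ ((((d.factorization p + 2) / 3 : ℕ)):ℝ) :=
    Finset.prod_pos fun p hp => Real.rpow_pos_of_pos (hP p hp) _
  have hSpos : (0:ℝ) < ∏ p ∈ P, (p:ℝ) ^ ((((d.factorization p + 1) / 2 : ℕ)):ℝ) :=
    Finset.prod_pos fun p hp => Real.rpow_pos_of_pos (hP p hp) _
  have hnum : (d : ℝ) ^ ((1:ℝ)/3) * (d:ℝ) ^ (-ε)
      = ∏ p ∈ P, (p:ℝ) ^ ((d.factorization p : ℝ) * (1/3 - ε)) := by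
    rw [← Real.rpow_add hdpos]
    conv_lhs => rw [← Nat.factorization_prod_pow_eq_self hd]
    rw [Finsupp.prod, Nat.support_factorization]
    push_cast
    rw [← Real.finset_prod_rpow _ _ (fun p hp => by positivity) _]
    refine Finset.prod_congr rfl fun p hp => ?_
    rw [← Real.rpow_natCast (p:ℝ) (d.factorization p), ← Real.rpow_mul (hP p hp).le,
      sub_eq_add_neg]
  calc (d : ℝ) ^ ((1:ℝ)/3) / ((cube0 d : ℝ) ^ ((2:ℝ)/3) * (sq0 d : ℝ)) * (d : ℝ) ^ (-ε)
      = ((d : ℝ) ^ ((1:ℝ)/3) * (d:ℝ) ^ (-ε))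
          / ((cube0 d : ℝ) ^ ((2:ℝ)/3) * (sq0 d : ℝ)) := by ring
    _ ≤ ((d : ℝ) ^ ((1:ℝ)/3) * (d:ℝ) ^ (-ε)) /
          ((∏ p ∈ P, (p:ℝ) ^ ((((d.factorization p + 2) / 3 : ℕ)):ℝ)) ^ ((2:ℝ)/3)
            * ∏ p ∈ P, (p:ℝ) ^ ((((d.factorization p + 1) / 2 : ℕ)):ℝ)) := by
        gcongr
    _ = ∏ p ∈ P, Wf ε p (d.factorization p) := by
        rw [hnum, prod_rpow_div P hP]
        rfl

noncomputable def rgeo : ℝ := (2:ℝ) ^ (-(1:ℝ)/3)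

private lemma rgeo_nonneg : 0 ≤ rgeo := Real.rpow_nonneg (by norm_num) _

private lemma rgeo_lt_one : rgeo < 1 :=
  Real.rpow_lt_one_of_one_lt_of_neg (by norm_num) (by norm_num)

noncomputable def Mc : ℝ := 1 + (1 - rgeo)⁻¹

private lemma Mc_nonneg : 0 ≤ Mc := by
  have h := rgeo_lt_one
  have h2 : 0 < 1 - rgeo := by linarith
  have h3 := inv_nonneg.mpr h2.le
  unfold Mc; linarith

private lemma Wf_term_le {ε : ℝ} (hε0 : 0 < ε) (hε : ε ≤ 1/3) {p : ℕ} (hp : 2 ≤ p)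
    {a : ℕ} (ha : 1 ≤ a) :
    Wf ε p a ≤ (p:ℝ) ^ (-(1 + 2*ε)) * rgeo ^ (a - 2) := by
  have hp1 : (1:ℝ) ≤ p := by exact_mod_cast Nat.one_le_of_lt hp
  have hp0 : (0:ℝ) < p := by linarith
  have hp2 : (2:ℝ) ≤ p := by exact_mod_cast hp
  have expo : (a : ℝ) * (1/3 - ε) - 2/3 * (((a + 2) / 3 : ℕ) : ℝ) - (((a + 1) / 2 : ℕ) : ℝ)
      ≤ -(1 + 2*ε) - ((a - 2 : ℕ) : ℝ)/3 := by
    rcases eq_or_lt_of_le ha with h1 | h2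
    · rw [← h1]
      norm_num
      linarith
    · -- a ≥ 2
      have ha2 : 2 ≤ a := h2
      have hn : 2 * a + 1 ≤ 2 * ((a + 2) / 3) + 3 * ((a + 1) / 2) := by omega
      have hnR : (2:ℝ) * a + 1 ≤ 2 * (((a + 2) / 3 : ℕ) : ℝ) + 3 * (((a + 1) / 2 : ℕ) : ℝ) := by
        exact_mod_cast hn
      have hsub : ((a - 2 : ℕ) : ℝ) = (a : ℝ) - 2 := by
        rw [Nat.cast_sub ha2]; norm_num
      have haR : (2:ℝ) ≤ (a : ℝ) := by exact_mod_cast ha2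
      have hmul : 2 * ε ≤ (a : ℝ) * ε := by nlinarith
      rw [hsub]
      linarith
  calc Wf ε p a ≤ (p:ℝ) ^ (-(1 + 2*ε) - ((a - 2 : ℕ) : ℝ)/3) :=
        Real.rpow_le_rpow_of_exponent_le hp1 expo
    _ = (p:ℝ) ^ (-(1 + 2*ε)) * (p:ℝ) ^ (-(((a - 2 : ℕ) : ℝ)/3)) := by
        rw [sub_eq_add_neg, Real.rpow_add hp0]
    _ ≤ (p:ℝ) ^ (-(1 + 2*ε)) * rgeo ^ (a - 2) := by
        have h1 : (p:ℝ) ^ (-(((a - 2 : ℕ) : ℝ)/3)) ≤ (2:ℝ) ^ (-(((a - 2 : ℕ) : ℝ)/3)) :=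
          Real.rpow_le_rpow_of_nonpos (by norm_num) hp2 (neg_nonpos.mpr (by positivity))
        have h2 : (2:ℝ) ^ (-(((a - 2 : ℕ) : ℝ)/3)) = rgeo ^ (a - 2) := by
          rw [rgeo, ← Real.rpow_natCast ((2:ℝ) ^ (-(1:ℝ)/3)) (a - 2),
            ← Real.rpow_mul (by norm_num)]
          congr 1; ring
        rw [← h2]
        exact mul_le_mul_of_nonneg_left h1 (Real.rpow_nonneg hp0.le _)

private lemma geo_aux (n : ℕ) : ∑ i ∈ Finset.range n, rgeo ^ (i - 1) ≤ Mc := by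
  have hr0 := rgeo_nonneg
  have hr1 := rgeo_lt_one
  have hinv : 0 < (1 - rgeo)⁻¹ := inv_pos.mpr (by linarith)
  cases n with
  | zero => simp [Mc]; linarith
  | succ n =>
    rw [Finset.sum_range_succ']
    have h1 : ∀ i ∈ Finset.range n, rgeo ^ (i + 1 - 1) = rgeo ^ i := by
      intro i _; norm_num
    rw [Finset.sum_congr rfl h1]
    have h2 : ∑ i ∈ Finset.range n, rgeo ^ i ≤ (1 - rgeo)⁻¹ := by
      have := Summable.sum_le_tsum (Finset.range n) (fun i _ => pow_nonneg hr0 i)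
        (summable_geometric_of_lt_one hr0 rgeo_lt_one)
      rwa [tsum_geometric_of_lt_one hr0 rgeo_lt_one] at this
    simp only [Nat.zero_sub, pow_zero, Mc]
    linarith

private lemma sum_Wf_le {ε : ℝ} (hε0 : 0 < ε) (hε : ε ≤ 1/3) {p : ℕ} (hp : 2 ≤ p) (N : ℕ) :
    ∑ a ∈ Finset.range (N + 1), Wf ε p a ≤ 1 + Mc * (p:ℝ) ^ (-(1 + 2*ε)) := by
  have hp0 : (0:ℝ) < p := by
    have : (0:ℕ) < p := by omega
    exact_mod_cast this
  have hrp : (0:ℝ) ≤ (p:ℝ) ^ (-(1 + 2*ε)) := Real.rpow_nonneg hp0.le _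
  rw [Finset.sum_range_succ', Wf_zero]
  have hstep : ∑ i ∈ Finset.range N, Wf ε p (i + 1)
      ≤ (p:ℝ) ^ (-(1 + 2*ε)) * ∑ i ∈ Finset.range N, rgeo ^ (i - 1) := by
    rw [Finset.mul_sum]
    refine Finset.sum_le_sum fun i _ => ?_
    have := Wf_term_le hε0 hε hp (a := i + 1) (by omega)
    have heq : i + 1 - 2 = i - 1 := by omega
    rwa [heq] at this
  have hgeo := geo_aux N
  have : (p:ℝ) ^ (-(1 + 2*ε)) * ∑ i ∈ Finset.range N, rgeo ^ (i - 1)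
      ≤ (p:ℝ) ^ (-(1 + 2*ε)) * Mc := mul_le_mul_of_nonneg_left hgeo hrp
  have hcomm : (p:ℝ) ^ (-(1 + 2*ε)) * Mc = Mc * (p:ℝ) ^ (-(1 + 2*ε)) := mul_comm _ _
  linarith

private lemma sum_le_prod_pi {N : ℕ} (W : ℕ → ℕ → ℝ)
    (hW0 : ∀ p, W p 0 = 1) (hWnn : ∀ p a, 0 ≤ W p a) :
    ∑ d ∈ Finset.Icc 1 N, ∏ p ∈ d.primeFactors, W p (d.factorization p)
      ≤ ∏ p ∈ (Finset.range (N + 1)).filter Nat.Prime,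
          ∑ a ∈ Finset.range (N + 1), W p a := by
  classical
  set P := (Finset.range (N + 1)).filter Nat.Prime with hPdef
  rw [Finset.prod_sum]
  -- rewrite each summand as a product over P.attach
  have key : ∀ d ∈ Finset.Icc 1 N,
      ∏ p ∈ d.primeFactors, W p (d.factorization p)
        = ∏ x ∈ P.attach, W x.1 (d.factorization x.1) := by
    intro d hd
    rw [Finset.mem_Icc] at hd
    have hd0 : d ≠ 0 := by omega
    rw [Finset.prod_attach P (fun p => W p (d.factorization p))]
    refine Finset.prod_subset ?_ ?_
    · intro p hp
      rw [hPdef, Finset.mem_filter, Finset.mem_range]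
      refine ⟨?_, Nat.prime_of_mem_primeFactors hp⟩
      have h1 : p ≤ d := Nat.le_of_dvd (Nat.pos_of_ne_zero hd0)
        (Nat.dvd_of_mem_primeFactors hp)
      omega
    · intro p _hp hnp
      have : d.factorization p = 0 := by
        rw [← Nat.support_factorization] at hnp
        exact Finsupp.notMem_support_iff.mp hnp
      rw [this, hW0]
  rw [Finset.sum_congr rfl key]
  -- the map sending d to its factorization as an element of the pi set
  set ι : ℕ → (∀ p ∈ P, ℕ) := fun d => fun p _ => d.factorization p with hι
  have hinj : Set.InjOn ι (Finset.Icc 1 N) := by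
    intro d1 h1 d2 h2 heq
    rw [Finset.coe_Icc, Set.mem_Icc] at h1 h2
    have hd1 : d1 ≠ 0 := by omega
    have hd2 : d2 ≠ 0 := by omega
    have hfac : d1.factorization = d2.factorization := by
      ext p
      by_cases hp : p.Prime
      · by_cases hpN : p < N + 1
        · have hpP : p ∈ P := by
            rw [hPdef, Finset.mem_filter, Finset.mem_range]; exact ⟨hpN, hp⟩
          have := congrFun (congrFun heq p) hpP
          exact this
        · have hb1 : d1 < p := by omega
          have hb2 : d2 < p := by omega
          rw [Nat.factorization_eq_zero_of_lt hb1, Nat.factorization_eq_zero_of_lt hb2]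
      · rw [Nat.factorization_eq_zero_of_not_prime d1 hp,
          Nat.factorization_eq_zero_of_not_prime d2 hp]
    exact Nat.factorization_inj (Set.mem_setOf.mpr hd1) (Set.mem_setOf.mpr hd2) hfac
  calc ∑ d ∈ Finset.Icc 1 N, ∏ x ∈ P.attach, W x.1 (d.factorization x.1)
      = ∑ φ ∈ (Finset.Icc 1 N).image ι, ∏ x ∈ P.attach, W x.1 (φ x.1 x.2) := by
        rw [Finset.sum_image (fun d hd e he h => hinj hd he h)]
    _ ≤ ∑ φ ∈ P.pi (fun _ => Finset.range (N + 1)),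
          ∏ x ∈ P.attach, W x.1 (φ x.1 x.2) := ?_
  refine Finset.sum_le_sum_of_subset_of_nonneg ?_ ?_
  · intro φ hφ
    rw [Finset.mem_image] at hφ
    obtain ⟨d, hd, rfl⟩ := hφ
    rw [Finset.mem_Icc] at hd
    rw [Finset.mem_pi]
    intro p hp
    rw [Finset.mem_range]
    show d.factorization p < N + 1
    have := Nat.factorization_lt (n := d) p (by omega)
    omega
  · intro φ _ _
    exact Finset.prod_nonneg fun x _ => hWnn x.1 _

theorem sum_third_sixth :
    ∀ ε : ℝ, 0 < ε → ∃ C : ℝ, 0 < C ∧ ∀ D : ℝ, 1 ≤ D →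
      ∑ d ∈ Finset.Icc 1 ⌊D⌋₊,
          (d : ℝ) ^ ((1 : ℝ) / 3) / ((cube0 d : ℝ) ^ ((2 : ℝ) / 3) * (sq0 d : ℝ))
        ≤ C * D ^ ε := by
  intro ε hε
  set ε' := min ε (1/3) with hε'def
  have hε'0 : 0 < ε' := lt_min hε (by norm_num)
  have hε'13 : ε' ≤ 1/3 := min_le_right _ _
  have hε'ε : ε' ≤ ε := min_le_left _ _
  have hsummable : Summable (fun n : ℕ => (n:ℝ) ^ (-(1 + 2*ε'))) :=
    Real.summable_nat_rpow.mpr (by linarith)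
  set T := ∑' n : ℕ, (n:ℝ) ^ (-(1 + 2*ε')) with hTdef
  refine ⟨Real.exp (Mc * T), Real.exp_pos _, ?_⟩
  intro D hD
  set N := ⌊D⌋₊ with hNdef
  have hD0 : (0:ℝ) < D := by linarith
  have hND : (N:ℝ) ≤ D := Nat.floor_le hD0.le
  have step1 : ∑ d ∈ Finset.Icc 1 N,
        (d : ℝ) ^ ((1:ℝ)/3) / ((cube0 d : ℝ) ^ ((2:ℝ)/3) * (sq0 d : ℝ))
      ≤ D ^ ε' * ∑ d ∈ Finset.Icc 1 N,
          ((d : ℝ) ^ ((1:ℝ)/3) / ((cube0 d : ℝ) ^ ((2:ℝ)/3) * (sq0 d : ℝ))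
            * (d : ℝ) ^ (-ε')) := by
    rw [Finset.mul_sum]
    refine Finset.sum_le_sum fun d hd => ?_
    rw [Finset.mem_Icc] at hd
    have hd1 : (1:ℝ) ≤ (d:ℝ) := by exact_mod_cast hd.1
    have hdD : (d:ℝ) ≤ D := le_trans (by exact_mod_cast Nat.cast_le.mpr hd.2) hND
    set f := (d : ℝ) ^ ((1:ℝ)/3) / ((cube0 d : ℝ) ^ ((2:ℝ)/3) * (sq0 d : ℝ)) with hfdef
    have hf : 0 ≤ f := by
      rw [hfdef]
      positivity
    have hid : (d:ℝ) ^ (-ε') * (d:ℝ) ^ ε' = 1 := by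
      rw [← Real.rpow_add (by linarith), neg_add_cancel, Real.rpow_zero]
    have hdd : (d:ℝ) ^ ε' ≤ D ^ ε' := Real.rpow_le_rpow (by linarith) hdD hε'0.le
    calc f = f * ((d:ℝ) ^ (-ε') * (d:ℝ) ^ ε') := by rw [hid, mul_one]
      _ = f * (d:ℝ) ^ (-ε') * (d:ℝ) ^ ε' := by ring
      _ ≤ f * (d:ℝ) ^ (-ε') * D ^ ε' := by
          refine mul_le_mul_of_nonneg_left hdd ?_
          have : (0:ℝ) ≤ (d:ℝ) ^ (-ε') := Real.rpow_nonneg (by linarith) _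
          exact mul_nonneg hf this
      _ = D ^ ε' * (f * (d:ℝ) ^ (-ε')) := by ring
  have step2 : ∑ d ∈ Finset.Icc 1 N,
        ((d : ℝ) ^ ((1:ℝ)/3) / ((cube0 d : ℝ) ^ ((2:ℝ)/3) * (sq0 d : ℝ)) * (d : ℝ) ^ (-ε'))
      ≤ ∑ d ∈ Finset.Icc 1 N, ∏ p ∈ d.primeFactors, Wf ε' p (d.factorization p) := by
    refine Finset.sum_le_sum fun d hd => ?_
    rw [Finset.mem_Icc] at hd
    exact pointwise ε' (by omega)
  have step3 := sum_le_prod_pi (N := N) (Wf ε') (Wf_zero ε') (Wf_nonneg ε')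
  have step4 : ∏ p ∈ (Finset.range (N + 1)).filter Nat.Prime,
        ∑ a ∈ Finset.range (N + 1), Wf ε' p a ≤ Real.exp (Mc * T) := by
    calc ∏ p ∈ (Finset.range (N + 1)).filter Nat.Prime,
          ∑ a ∈ Finset.range (N + 1), Wf ε' p a
        ≤ ∏ p ∈ (Finset.range (N + 1)).filter Nat.Prime,
            Real.exp (Mc * (p:ℝ) ^ (-(1 + 2*ε'))) := by
          refine Finset.prod_le_prod (fun p _ => ?_) (fun p hp => ?_)
          · exact Finset.sum_nonneg fun a _ => Wf_nonneg ε' p a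
          · have hp2 : 2 ≤ p := (Finset.mem_filter.mp hp).2.two_le
            refine le_trans (sum_Wf_le hε'0 hε'13 hp2 N) ?_
            have h := Real.add_one_le_exp (Mc * (p:ℝ) ^ (-(1 + 2*ε')))
            linarith
      _ = Real.exp (∑ p ∈ (Finset.range (N + 1)).filter Nat.Prime,
            Mc * (p:ℝ) ^ (-(1 + 2*ε'))) := (Real.exp_sum _ _).symm
      _ ≤ Real.exp (Mc * T) := by
          rw [Real.exp_le_exp, ← Finset.mul_sum]
          refine mul_le_mul_of_nonneg_left ?_ Mc_nonneg
          exact Summable.sum_le_tsum _ (fun n _ => Real.rpow_nonneg (Nat.cast_nonneg n) _) hsummable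
  have hDε : D ^ ε' ≤ D ^ ε := Real.rpow_le_rpow_of_exponent_le hD hε'ε
  have hfinal : D ^ ε' * Real.exp (Mc * T) ≤ Real.exp (Mc * T) * D ^ ε := by
    rw [mul_comm]
    exact mul_le_mul_of_nonneg_left hDε (Real.exp_pos _).le
  have hmid := le_trans step2 (le_trans step3 step4)
  have h2 : D ^ ε' * (∑ d ∈ Finset.Icc 1 N,
        ((d : ℝ) ^ ((1:ℝ)/3) / ((cube0 d : ℝ) ^ ((2:ℝ)/3) * (sq0 d : ℝ)) * (d : ℝ) ^ (-ε')))
      ≤ D ^ ε' * Real.exp (Mc * T) := by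
    refine mul_le_mul_of_nonneg_left hmid (Real.rpow_nonneg hD0.le _)
  exact le_trans step1 (le_trans h2 hfinal)
end

section
/- For every ε > 0, ∑_{d ≤ D} d·√(d*)/(√(d₀)·(d')^{3/2}) ≪ D^{1/2+ε}, where d' is the least m with d | m², d* = (d')²/d is the square-free kernel, and d₀ is the least m with d | m³. -/
/-- `dstar d = (d')² / d` is the square-free kernel of `d`. -/
noncomputable def dstar (d : ℕ) : ℕ := (sq0 d) ^ 2 / d

/-!
Write `d = s k²` with `s = d*` squarefree and `k = d / d'`, so that `d' = s k` and the summand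
is `√(k / d₀)`. If `c` is the least `m` with `k² ∣ m³` and `b = k / c`, then `b³ ∣ k`, and
`k ∣ b m` whenever `k² ∣ m³`; in particular `k ∣ b d₀`. The part `a = s / gcd(s, k)` of `s` is
coprime to `k` and divides `d₀`, so `a k ≤ b d₀` and the summand is at most `√(b / a)`.
Splitting `gcd(s, k) ∣ b³ · (k / b³)` as `g₁ g₂` with `g₁ ∣ b³` and `k / b³ = g₂ j` gives
`d = a g₁ g₂ (b³ g₂ j)²`. Summing `√b / √a` over all such tuples, first over
`a ≤ N / (g₁ (b³ g₂ j)²)` and then over `g₁ ≤ b³`, leaves `√N` times three harmonic sums,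
hence `O(√N log³ N)`.
-/

open Finset Real

theorem Finset.sum_le_sum_of_forall_exists_fiber {ι κ M : Type*} [AddCommMonoid M]
    [PartialOrder M] [IsOrderedAddMonoid M] [DecidableEq ι] {s : Finset ι} {t : Finset κ}
    (p : κ → ι) {f : ι → M} {g : κ → M} (hg : ∀ x ∈ t, 0 ≤ g x)
    (h : ∀ i ∈ s, ∃ x ∈ t, p x = i ∧ f i ≤ g x) :
    ∑ i ∈ s, f i ≤ ∑ x ∈ t, g x := by
  have hg' (i : ι) : ∀ x ∈ {x ∈ t | p x = i}, 0 ≤ g x := fun x hx => hg x (mem_filter.1 hx).1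
  calc ∑ i ∈ s, f i ≤ ∑ i ∈ s, ∑ x ∈ t with p x = i, g x := sum_le_sum fun i hi => by
        obtain ⟨x, hx, rfl, hle⟩ := h i hi
        exact hle.trans (single_le_sum (hg' _) (mem_filter.2 ⟨hx, rfl⟩))
    _ ≤ ∑ x ∈ t, g x := sum_fiberwise_le_sum_of_sum_fiber_nonneg fun i _ => sum_nonneg (hg' i)

theorem sum_Icc_inv_le_one_add_log (N : ℕ) : ∑ j ∈ Icc 1 N, (j : ℝ)⁻¹ ≤ 1 + log N := by
  simpa [harmonic_eq_sum_Icc] using harmonic_le_one_add_log N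

theorem sum_Icc_inv_sqrt_le (M : ℕ) : ∑ a ∈ Icc 1 M, (√a)⁻¹ ≤ 2 * √M := by
  induction M with
  | zero => simp
  | succ M ih =>
    rw [sum_Icc_succ_top (by omega), Nat.cast_succ]
    have hx := sq_sqrt (by positivity : (0 : ℝ) ≤ M + 1)
    have hy := sq_sqrt (Nat.cast_nonneg (α := ℝ) M)
    have : (√(M + 1))⁻¹ ≤ 2 * √(M + 1) - 2 * √M := by
      rw [inv_le_iff_one_le_mul₀ (sqrt_pos.2 (by positivity))]
      nlinarith [sq_nonneg (√(M + 1) - √M), sqrt_nonneg M]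
    linarith

theorem sum_inv_sqrt_le_of_subset_Icc {s : Finset ℕ} {M : ℕ} (hs : s ⊆ Icc 1 M) :
    ∑ a ∈ s, (√a)⁻¹ ≤ 2 * √M :=
  (sum_le_sum_of_subset_of_nonneg hs fun _ _ _ => by positivity).trans (sum_Icc_inv_sqrt_le M)

theorem one_add_log_pow_le (k : ℕ) {x ε : ℝ} (hx : 1 ≤ x) (hε : 0 < ε) :
    (1 + log x) ^ k ≤ (1 + k / ε) ^ k * x ^ ε := by
  rcases k.eq_zero_or_pos with rfl | hk
  · simpa using one_le_rpow hx hε.le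
  have hδ : 0 < ε / k := by positivity
  have hlog : 1 + log x ≤ (1 + k / ε) * x ^ (ε / k) := by
    have h1 := log_le_rpow_div (x := x) (by linarith) hδ
    have h2 := one_le_rpow hx hδ.le
    rw [div_div_eq_mul_div, mul_div_assoc, mul_comm] at h1
    linarith
  calc (1 + log x) ^ k ≤ ((1 + k / ε) * x ^ (ε / k)) ^ k := by
        gcongr
        linarith [log_nonneg hx]
    _ = (1 + k / ε) ^ k * x ^ ε := by
        rw [mul_pow, ← rpow_natCast (x ^ _), ← rpow_mul (by linarith),
          div_mul_cancel₀ _ (by positivity)]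

section LeastRoot

variable {d m n : ℕ}

theorem sInf_pos_dvd_pow_mem (hd : 0 < d) (hn : n ≠ 0) :
    0 < sInf {r : ℕ | 0 < r ∧ d ∣ r ^ n} ∧ d ∣ sInf {r : ℕ | 0 < r ∧ d ∣ r ^ n} ^ n :=
  Nat.sInf_mem (s := {r : ℕ | 0 < r ∧ d ∣ r ^ n}) ⟨d, hd, dvd_pow_self d hn⟩

theorem sInf_pos_dvd_pow_dvd (hm : 0 < m) (h : d ∣ m ^ n) :
    sInf {r : ℕ | 0 < r ∧ d ∣ r ^ n} ∣ m := by
  set r := sInf {r : ℕ | 0 < r ∧ d ∣ r ^ n}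
  obtain ⟨hr, hdr⟩ : 0 < r ∧ d ∣ r ^ n :=
    Nat.sInf_mem (s := {r : ℕ | 0 < r ∧ d ∣ r ^ n}) ⟨m, hm, h⟩
  have hle : r ≤ Nat.gcd r m := Nat.sInf_le
    ⟨Nat.gcd_pos_of_pos_left m hr, by rw [← Nat.pow_gcd_pow]; exact Nat.dvd_gcd hdr h⟩
  rw [← Nat.gcd_eq_left_iff_dvd]
  exact le_antisymm (Nat.le_of_dvd hr (Nat.gcd_dvd_left r m)) hle

theorem sq0_pos (hd : 0 < d) : 0 < sq0 d := (sInf_pos_dvd_pow_mem hd two_ne_zero).1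

theorem dvd_sq0_sq (hd : 0 < d) : d ∣ sq0 d ^ 2 := (sInf_pos_dvd_pow_mem hd two_ne_zero).2

theorem sq0_dvd (hm : 0 < m) (h : d ∣ m ^ 2) : sq0 d ∣ m := sInf_pos_dvd_pow_dvd hm h

theorem cube0_pos (hd : 0 < d) : 0 < cube0 d := (sInf_pos_dvd_pow_mem hd three_ne_zero).1

theorem dvd_cube0_cube (hd : 0 < d) : d ∣ cube0 d ^ 3 := (sInf_pos_dvd_pow_mem hd three_ne_zero).2

theorem cube0_dvd (hm : 0 < m) (h : d ∣ m ^ 3) : cube0 d ∣ m := sInf_pos_dvd_pow_dvd hm h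

theorem mul_dstar (hd : 0 < d) : d * dstar d = sq0 d ^ 2 := Nat.mul_div_cancel' (dvd_sq0_sq hd)

theorem squarefree_dstar (hd : 0 < d) : Squarefree (dstar d) := by
  rw [Nat.squarefree_iff_prime_squarefree]
  rintro p hp ⟨t, ht⟩
  have hsq : d * (p * p * t) = sq0 d ^ 2 := ht ▸ mul_dstar hd
  obtain ⟨q, hq⟩ : p ∣ sq0 d := hp.dvd_of_dvd_pow (n := 2) ⟨p * t * d, by rw [← hsq]; ring⟩
  have hq0 : 0 < q := Nat.pos_of_mul_pos_left (hq ▸ sq0_pos hd)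
  have hdq : d ∣ q ^ 2 :=
    ⟨t, Nat.eq_of_mul_eq_mul_left (pow_pos hp.pos 2) (by rw [← mul_pow, ← hq, ← hsq]; ring)⟩
  have hpq : p * q ∣ 1 * q := by rw [one_mul, ← hq]; exact sq0_dvd hq0 hdq
  exact hp.one_lt.ne' (Nat.dvd_one.mp (Nat.dvd_of_mul_dvd_mul_right hq0 hpq))

theorem sq0_mul_div_sq0 (hd : 0 < d) : sq0 d * (d / sq0 d) = d :=
  Nat.mul_div_cancel' (sq0_dvd hd (dvd_pow_self d two_ne_zero))

theorem dstar_mul_div_sq0 (hd : 0 < d) : dstar d * (d / sq0 d) = sq0 d := by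
  refine Nat.eq_of_mul_eq_mul_left (sq0_pos hd) ?_
  calc sq0 d * (dstar d * (d / sq0 d)) = sq0 d * (d / sq0 d) * dstar d := by ring
    _ = sq0 d * sq0 d := by rw [sq0_mul_div_sq0 hd, mul_dstar hd, sq]

theorem dstar_mul_div_sq0_sq (hd : 0 < d) : dstar d * (d / sq0 d) ^ 2 = d := by
  rw [sq, ← mul_assoc, dstar_mul_div_sq0 hd, sq0_mul_div_sq0 hd]

end LeastRoot

theorem exists_cube_dvd_and_dvd_mul {k : ℕ} (hk : 0 < k) :
    ∃ b, b ^ 3 ∣ k ∧ ∀ m, 0 < m → k ^ 2 ∣ m ^ 3 → k ∣ b * m := by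
  set c := cube0 (k ^ 2)
  have hc : 0 < c := cube0_pos (pow_pos hk 2)
  obtain ⟨b, hbc⟩ : c ∣ k := cube0_dvd hk ⟨k, by ring⟩
  refine ⟨b, ?_, fun m hm hkm => hbc ▸ mul_comm c b ▸ mul_dvd_mul_left b (cube0_dvd hm hkm)⟩
  have hb : b ^ 2 ∣ c := by
    refine (Nat.mul_dvd_mul_iff_right (pow_pos hc 2)).mp ?_
    calc b ^ 2 * c ^ 2 = k ^ 2 := by rw [hbc]; ring
      _ ∣ c ^ 3 := dvd_cube0_cube (pow_pos hk 2)
      _ = c * c ^ 2 := by ring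
  calc b ^ 3 = b * b ^ 2 := by ring
    _ ∣ b * c := mul_dvd_mul_left b hb
    _ = k := by rw [hbc, mul_comm]

noncomputable def weight (d : ℕ) : ℝ :=
  d * √(dstar d) / (√(cube0 d) * (sq0 d : ℝ) ^ ((3 : ℝ) / 2))

theorem weight_eq {d : ℕ} (hd : 0 < d) : weight d = √(d / sq0 d : ℕ) / √(cube0 d) := by
  rw [weight]
  have hsk := dstar_mul_div_sq0 hd
  have hdk := dstar_mul_div_sq0_sq hd
  set s := dstar d
  set k := d / sq0 d
  have hs : (0 : ℝ) < s := by exact_mod_cast Nat.pos_of_mul_pos_right (hsk ▸ sq0_pos hd)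
  have hk : (0 : ℝ) < k := by exact_mod_cast Nat.pos_of_mul_pos_left (hsk ▸ sq0_pos hd)
  have h32 : ((s : ℝ) * k) ^ ((3 : ℝ) / 2) = s * k * (√s * √k) := by
    rw [show (3 : ℝ) / 2 = 1 + 1 / 2 by norm_num, rpow_add (by positivity), rpow_one,
      ← sqrt_eq_rpow, sqrt_mul hs.le]
  have hd' : (d : ℝ) = s * k ^ 2 := by exact_mod_cast hdk.symm
  have hq : (sq0 d : ℝ) = s * k := by exact_mod_cast hsk.symm
  rw [hd', hq, h32]
  field_simp
  rw [sq_sqrt hk.le]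

theorem weight_le_of_mul_le {d a b : ℕ} (hd : 0 < d) (ha : 0 < a)
    (h : a * (d / sq0 d) ≤ b * cube0 d) : weight d ≤ √b / √a := by
  rw [weight_eq hd, div_le_div_iff₀ (sqrt_pos.2 (by exact_mod_cast cube0_pos hd))
    (sqrt_pos.2 (by exact_mod_cast ha)), ← sqrt_mul (Nat.cast_nonneg _),
    ← sqrt_mul (Nat.cast_nonneg _)]
  exact sqrt_le_sqrt (by rw [mul_comm]; exact_mod_cast h)

theorem exists_decomposition {d : ℕ} (hd : 0 < d) :
    ∃ b g₁ g₂ j a : ℕ, d = a * g₁ * g₂ * (b ^ 3 * g₂ * j) ^ 2 ∧ g₁ ∣ b ^ 3 ∧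
      weight d ≤ √b / √a := by
  have hdk := dstar_mul_div_sq0_sq hd
  have hsd : dstar d ∣ d := Dvd.intro _ hdk
  have hs := squarefree_dstar hd
  set s := dstar d
  set k := d / sq0 d
  have hk : 0 < k := pos_of_ne_zero fun h => by simp [h] at hdk; omega
  obtain ⟨b, ⟨m, hm⟩, hb⟩ := exists_cube_dvd_and_dvd_mul hk
  have hb0 : 0 < b := pos_of_ne_zero fun h => by simp [h] at hm; omega
  obtain ⟨g₁, g₂, hg₁, ⟨j, hj⟩, hg⟩ := dvd_mul.mp (hm ▸ Nat.gcd_dvd_right s k)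
  have hag : s / s.gcd k * s.gcd k = s := Nat.div_mul_cancel (Nat.gcd_dvd_left s k)
  set a := s / s.gcd k
  have ha : 0 < a := pos_of_ne_zero fun h => by simp [h] at hag; simp [← hag] at hdk; omega
  have hdc := dvd_cube0_cube hd
  have hak : a * k ∣ b * cube0 d := by
    refine (Nat.coprime_div_gcd_of_squarefree hs hk.ne').mul_dvd_of_dvd_of_dvd ?_ ?_
    · exact (Dvd.intro _ hag).trans ((hs.dvd_pow_iff_dvd three_ne_zero).mp (hsd.trans hdc))
        |>.mul_left b
    · exact hb _ (cube0_pos hd) ((Dvd.intro_left _ hdk).trans hdc)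
  refine ⟨b, g₁, g₂, j, a, ?_, hg₁,
    weight_le_of_mul_le hd ha (Nat.le_of_dvd (Nat.mul_pos hb0 (cube0_pos hd)) hak)⟩
  rw [← hdk, ← hag, hm, hg, hj]
  ring

-- The bound `√b / √a` for `d = a g₁ g₂ (b³ g₂ j)²`, on the relaxed range `a g₁ (b³ g₂ j)² ≤ N`.
noncomputable def tupleWeight (N b g₁ g₂ j a : ℕ) : ℝ :=
  if g₁ ≤ b ^ 3 ∧ a * (g₁ * (b ^ 3 * g₂ * j) ^ 2) ≤ N then √b / √a else 0

theorem tupleWeight_nonneg (N b g₁ g₂ j a : ℕ) : 0 ≤ tupleWeight N b g₁ g₂ j a := by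
  unfold tupleWeight
  positivity

theorem sum_tupleWeight_le_of_pos {N b g₁ g₂ j : ℕ} (hb : 0 < b) (hg₁ : 0 < g₁) (hg₂ : 0 < g₂)
    (hj : 0 < j) :
    ∑ a ∈ Icc 1 N, tupleWeight N b g₁ g₂ j a
      ≤ 2 * √N * (√b / b ^ 3) * (if g₁ ≤ b ^ 3 then (√g₁)⁻¹ else 0) * (g₂ : ℝ)⁻¹ * (j : ℝ)⁻¹ := by
  by_cases h : g₁ ≤ b ^ 3
  swap
  · simp [tupleWeight, h]
  set Q := g₁ * (b ^ 3 * g₂ * j) ^ 2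
  have hQ : 0 < Q := by positivity
  have hsub : {a ∈ Icc 1 N | a * Q ≤ N} ⊆ Icc 1 (N / Q) := fun a ha => by
    simp only [mem_filter, mem_Icc, Nat.le_div_iff_mul_le hQ] at ha ⊢
    exact ⟨ha.1.1, ha.2⟩
  have hsqrtQ : √(Q : ℝ) = √g₁ * (b ^ 3 * g₂ * j) := by
    rw [Nat.cast_mul, sqrt_mul (Nat.cast_nonneg _), Nat.cast_pow, sqrt_sq (by positivity)]
    push_cast
    ring
  have hg₁' : (0 : ℝ) < √g₁ := sqrt_pos.2 (by exact_mod_cast hg₁)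
  simp only [tupleWeight, h, true_and, if_true, ← sum_filter]
  calc ∑ a ∈ Icc 1 N with a * Q ≤ N, √b / √a = √b * ∑ a ∈ Icc 1 N with a * Q ≤ N, (√a)⁻¹ := by
        simp only [mul_sum, div_eq_mul_inv]
    _ ≤ √b * (2 * √(N / Q : ℕ)) := by gcongr; exact sum_inv_sqrt_le_of_subset_Icc hsub
    _ ≤ √b * (2 * (√N / √Q)) := by
        gcongr
        rw [← sqrt_div' _ (Nat.cast_nonneg _)]
        exact sqrt_le_sqrt Nat.cast_div_le
    _ = _ := by
        rw [hsqrtQ]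
        field_simp

theorem sum_tupleWeight_le (N : ℕ) :
    ∑ b ∈ Icc 1 N, ∑ g₁ ∈ Icc 1 N, ∑ g₂ ∈ Icc 1 N, ∑ j ∈ Icc 1 N, ∑ a ∈ Icc 1 N,
      tupleWeight N b g₁ g₂ j a ≤ 4 * √N * (1 + log N) ^ 3 := by
  have hH := sum_Icc_inv_le_one_add_log N
  have hterm (b : ℕ) (hb : b ∈ Icc 1 N) :
      2 * √N * (√b / b ^ 3) * (2 * √(b ^ 3 : ℕ)) = 4 * √N * (b : ℝ)⁻¹ := by
    have hb : (0 : ℝ) < b := by exact_mod_cast (mem_Icc.1 hb).1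
    rw [Nat.cast_pow, show (b : ℝ) ^ 3 = b ^ 2 * b by ring, sqrt_mul (by positivity),
      sqrt_sq hb.le]
    field_simp
    rw [sq_sqrt hb.le]
    ring
  calc _ ≤ ∑ b ∈ Icc 1 N, ∑ g₁ ∈ Icc 1 N, ∑ g₂ ∈ Icc 1 N, ∑ j ∈ Icc 1 N,
          2 * √N * (√b / b ^ 3) * (if g₁ ≤ b ^ 3 then (√g₁)⁻¹ else 0) * (g₂ : ℝ)⁻¹ *
            (j : ℝ)⁻¹ := by
        gcongr with b hb g₁ hg₁ g₂ hg₂ j hj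
        exact sum_tupleWeight_le_of_pos (mem_Icc.1 hb).1 (mem_Icc.1 hg₁).1 (mem_Icc.1 hg₂).1
          (mem_Icc.1 hj).1
    _ = (∑ b ∈ Icc 1 N, 2 * √N * (√b / b ^ 3) *
            ∑ g₁ ∈ Icc 1 N, if g₁ ≤ b ^ 3 then (√g₁)⁻¹ else 0) *
          (∑ j ∈ Icc 1 N, (j : ℝ)⁻¹) ^ 2 := by
        simp only [← mul_sum, ← sum_mul]
        ring
    _ ≤ (∑ b ∈ Icc 1 N, 2 * √N * (√b / b ^ 3) * (2 * √(b ^ 3 : ℕ))) * (1 + log N) ^ 2 := by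
        gcongr with b hb
        rw [← sum_filter]
        exact sum_inv_sqrt_le_of_subset_Icc fun g hg => by simp_all
    _ = 4 * √N * (∑ b ∈ Icc 1 N, (b : ℝ)⁻¹) * (1 + log N) ^ 2 := by
        rw [sum_congr rfl hterm, ← mul_sum]
    _ ≤ 4 * √N * (1 + log N) * (1 + log N) ^ 2 := by gcongr
    _ = 4 * √N * (1 + log N) ^ 3 := by ring

theorem mem_Icc_of_dvd {x d N : ℕ} (hd : d ∈ Icc 1 N) (hx : x ∣ d) : x ∈ Icc 1 N := by
  rw [mem_Icc] at hd ⊢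
  exact ⟨Nat.pos_of_dvd_of_pos hx hd.1, (Nat.le_of_dvd hd.1 hx).trans hd.2⟩

theorem exists_tuple_of_mem_Icc {N d : ℕ} (hd : d ∈ Icc 1 N) :
    ∃ t ∈ Icc 1 N ×ˢ Icc 1 N ×ˢ Icc 1 N ×ˢ Icc 1 N ×ˢ Icc 1 N,
      t.2.2.2.2 * t.2.1 * t.2.2.1 * (t.1 ^ 3 * t.2.2.1 * t.2.2.2.1) ^ 2 = d ∧
      weight d ≤ tupleWeight N t.1 t.2.1 t.2.2.1 t.2.2.2.1 t.2.2.2.2 := by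
  obtain ⟨b, g₁, g₂, j, a, rfl, hg₁, hw⟩ := exists_decomposition (mem_Icc.1 hd).1
  have hb := mem_Icc_of_dvd hd
    ((dvd_pow ((dvd_pow_self b three_ne_zero).mul_right _ |>.mul_right _) two_ne_zero).mul_left _)
  have hg₂ := mem_Icc_of_dvd hd ((dvd_mul_left g₂ _).mul_right _)
  have hle : a * (g₁ * (b ^ 3 * g₂ * j) ^ 2) ≤ N :=
    calc a * (g₁ * (b ^ 3 * g₂ * j) ^ 2) = a * g₁ * 1 * (b ^ 3 * g₂ * j) ^ 2 := by ring
      _ ≤ a * g₁ * g₂ * (b ^ 3 * g₂ * j) ^ 2 := by gcongr; exact (mem_Icc.1 hg₂).1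
      _ ≤ N := (mem_Icc.1 hd).2
  refine ⟨(b, g₁, g₂, j, a), ?_, rfl, ?_⟩
  · simp only [mem_product]
    exact ⟨hb, mem_Icc_of_dvd hd ((dvd_mul_left g₁ a).mul_right _ |>.mul_right _), hg₂,
      mem_Icc_of_dvd hd ((dvd_pow (dvd_mul_left j _) two_ne_zero).mul_left _),
      mem_Icc_of_dvd hd ((dvd_mul_right a g₁).mul_right _ |>.mul_right _)⟩
  · rwa [tupleWeight, if_pos ⟨Nat.le_of_dvd (pow_pos (mem_Icc.1 hb).1 3) hg₁, hle⟩]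

theorem sum_weight_le_sum_tupleWeight (N : ℕ) :
    ∑ d ∈ Icc 1 N, weight d ≤
      ∑ b ∈ Icc 1 N, ∑ g₁ ∈ Icc 1 N, ∑ g₂ ∈ Icc 1 N, ∑ j ∈ Icc 1 N, ∑ a ∈ Icc 1 N,
        tupleWeight N b g₁ g₂ j a := by
  calc ∑ d ∈ Icc 1 N, weight d
      ≤ ∑ t ∈ Icc 1 N ×ˢ Icc 1 N ×ˢ Icc 1 N ×ˢ Icc 1 N ×ˢ Icc 1 N,
          tupleWeight N t.1 t.2.1 t.2.2.1 t.2.2.2.1 t.2.2.2.2 :=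
        sum_le_sum_of_forall_exists_fiber _ (fun _ _ => tupleWeight_nonneg ..)
          fun _ hd => exists_tuple_of_mem_Icc hd
    _ = _ := by simp only [sum_product]

theorem sum_first_estimate :
    ∀ ε : ℝ, 0 < ε → ∃ C : ℝ, 0 < C ∧ ∀ D : ℝ, 1 ≤ D →
      ∑ d ∈ Finset.Icc 1 ⌊D⌋₊,
          (d : ℝ) * Real.sqrt (dstar d) /
            (Real.sqrt (cube0 d) * (sq0 d : ℝ) ^ ((3 : ℝ) / 2))
        ≤ C * D ^ (1 / 2 + ε) := by
  intro ε hε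
  refine ⟨4 * (1 + 3 / ε) ^ 3, by positivity, fun D hD => ?_⟩
  have hN : (1 : ℝ) ≤ ⌊D⌋₊ := by exact_mod_cast Nat.one_le_floor_iff _ |>.mpr hD
  have hND : (⌊D⌋₊ : ℝ) ≤ D := Nat.floor_le (by linarith)
  calc ∑ d ∈ Icc 1 ⌊D⌋₊, weight d
      ≤ 4 * √⌊D⌋₊ * (1 + log ⌊D⌋₊) ^ 3 :=
        (sum_weight_le_sum_tupleWeight _).trans (sum_tupleWeight_le _)
    _ ≤ 4 * D ^ (1 / 2 : ℝ) * ((1 + 3 / ε) ^ 3 * D ^ ε) := by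
        gcongr
        · rw [← sqrt_eq_rpow]; exact sqrt_le_sqrt hND
        · have h := one_add_log_pow_le 3 hN hε
          push_cast at h
          exact h.trans (by gcongr)
    _ = 4 * (1 + 3 / ε) ^ 3 * D ^ (1 / 2 + ε) := by
        rw [rpow_add (by linarith)]; ring
end
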